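/- Let G be a finite abelian p-group and A a group of automorphisms of G with gcd(|A|, p) = 1. If a₁, a₂ ∈ A commute, a₂ centralizes [G,a₁], and a₁ centralizes [G,a₂], then [G,a₁]·[G,a₂] ≤ [G, a₁a₂]. -/

import Mathlib

/-! For an automorphism `a` of order coprime to `|G|`, the map `g ↦ g⁻¹ * a g` is injective on
`[G, a]`: a fixed point `k ∈ [G, a]` satisfies `k ^ orderOf a = ∏ᵢ aⁱ k = 1`, because the norm
`∏ᵢ aⁱ` kills every `g⁻¹ * a g` by telescoping. By finiteness it is then onto `[G, a]`, i.e.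
`[G, a] = [[G, a], a]`. So every `h ∈ [G, a₁]` is `k⁻¹ * a₁ k` with `k ∈ [G, a₁]`, and as `a₂`
fixes `k` this is `k⁻¹ * (a₁ * a₂) k`. For `h ∈ [G, a₂]` write `h = k⁻¹ * a₂ k` with
`k ∈ [G, a₂]`; then `a₂ k ∈ [G, a₂]` is fixed by `a₁`, so again `h = k⁻¹ * (a₁ * a₂) k`. -/

namespace MulAut

variable {G : Type*} [CommGroup G]

def commutatorHom (a : MulAut G) : G →* G :=
  (MonoidHom.id G)⁻¹ * (a : G →* G)

variable (a b : MulAut G)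

theorem commutatorHom_apply (g : G) : commutatorHom a g = g⁻¹ * a g := rfl

theorem closure_inv_mul_apply_eq_range_commutatorHom :
    Subgroup.closure {x : G | ∃ g : G, x = g⁻¹ * a g} = (commutatorHom a).range := by
  have hset : {x : G | ∃ g : G, x = g⁻¹ * a g} = Set.range (commutatorHom a) := by
    ext x
    simp [commutatorHom_apply, eq_comm]
  rw [hset, ← MonoidHom.coe_range, Subgroup.closure_eq]

theorem commutatorHom_eq_one_iff {g : G} : commutatorHom a g = 1 ↔ a g = g := by
  rw [commutatorHom_apply, inv_mul_eq_one, eq_comm]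

variable {a}

theorem apply_mem_range_commutatorHom {k : G} (hk : k ∈ (commutatorHom a).range) :
    a k ∈ (commutatorHom a).range := by
  obtain ⟨g, rfl⟩ := hk
  exact ⟨a g, by simp [commutatorHom_apply]⟩

theorem prod_pow_apply_commutatorHom (g : G) :
    ∏ i ∈ Finset.range (orderOf a), (a ^ i) (commutatorHom a g) = 1 := by
  have htelescope : ∀ i : ℕ, (a ^ i) (commutatorHom a g) = (a ^ (i + 1)) g / (a ^ i) g := by
    intro i
    rw [commutatorHom_apply, map_mul, map_inv, pow_succ, MulAut.mul_apply, div_eq_inv_mul]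
  simp_rw [htelescope, Finset.prod_range_div (fun i => (a ^ i) g), pow_orderOf_eq_one]
  simp

theorem eq_one_of_mem_range_commutatorHom_of_apply_eq_self
    (hcop : (Nat.card G).Coprime (orderOf a)) {k : G} (hk : k ∈ (commutatorHom a).range)
    (hak : a k = k) : k = 1 := by
  have hfixed : ∀ i : ℕ, (a ^ i) k = k := fun i => by
    induction i with
    | zero => rfl
    | succ i ih => rw [pow_succ, MulAut.mul_apply, hak, ih]
  have hnorm : k ^ orderOf a = 1 := by
    obtain ⟨g, rfl⟩ := hk
    simpa [hfixed] using prod_pow_apply_commutatorHom (a := a) g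
  exact (pow_eq_one_iff_of_coprime hcop).mp ⟨pow_card_eq_one', hnorm⟩

variable [Finite G]

theorem surjOn_commutatorHom_range (hcop : (Nat.card G).Coprime (orderOf a)) :
    Set.SurjOn (commutatorHom a) (commutatorHom a).range (commutatorHom a).range := by
  have hmaps : Set.MapsTo (commutatorHom a) (commutatorHom a).range (commutatorHom a).range :=
    fun x _ => ⟨x, rfl⟩
  have hinj : Set.InjOn (commutatorHom a) (commutatorHom a).range := by
    intro x hx y hy hxy
    have hdiv : commutatorHom a (x / y) = 1 := by rw [map_div, hxy, div_self']
    rw [commutatorHom_eq_one_iff] at hdiv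
    exact div_eq_one.mp (eq_one_of_mem_range_commutatorHom_of_apply_eq_self hcop
      (div_mem hx hy) hdiv)
  exact ((Set.toFinite _).injOn_iff_bijOn_of_mapsTo hmaps).mp hinj |>.surjOn

theorem range_commutatorHom_le_mul_right (hcop : (Nat.card G).Coprime (orderOf a))
    (hb : ∀ x ∈ (commutatorHom a).range, b x = x) :
    (commutatorHom a).range ≤ (commutatorHom (a * b)).range := by
  intro h hh
  obtain ⟨k, hk, rfl⟩ := surjOn_commutatorHom_range hcop hh
  exact ⟨k, by rw [commutatorHom_apply, commutatorHom_apply, MulAut.mul_apply, hb k hk]⟩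

theorem range_commutatorHom_le_mul_left (hcop : (Nat.card G).Coprime (orderOf a))
    (hb : ∀ x ∈ (commutatorHom a).range, b x = x) :
    (commutatorHom a).range ≤ (commutatorHom (b * a)).range := by
  intro h hh
  obtain ⟨k, hk, rfl⟩ := surjOn_commutatorHom_range hcop hh
  exact ⟨k, by rw [commutatorHom_apply, commutatorHom_apply, MulAut.mul_apply,
    hb _ (apply_mem_range_commutatorHom hk)]⟩

end MulAut

open MulAut in
theorem stmt_9_general (p : ℕ) [Fact p.Prime] (G : Type*) [CommGroup G] [Finite G]
    (hG : IsPGroup p G) (a₁ a₂ : MulAut G)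
    (h₁ : (orderOf a₁).Coprime p) (h₂ : (orderOf a₂).Coprime p)
    (hc₂ : ∀ x ∈ Subgroup.closure {x : G | ∃ g : G, x = g⁻¹ * a₁ g}, a₂ x = x)
    (hc₁ : ∀ x ∈ Subgroup.closure {x : G | ∃ g : G, x = g⁻¹ * a₂ g}, a₁ x = x) :
    Subgroup.closure {x : G | ∃ g : G, x = g⁻¹ * a₁ g} ⊔
      Subgroup.closure {x : G | ∃ g : G, x = g⁻¹ * a₂ g} ≤
      Subgroup.closure {x : G | ∃ g : G, x = g⁻¹ * (a₁ * a₂) g} := by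
  obtain ⟨n, hcard⟩ := IsPGroup.iff_card.mp hG
  have hcop : ∀ a : MulAut G, (orderOf a).Coprime p → (Nat.card G).Coprime (orderOf a) :=
    fun a ha => hcard ▸ ha.symm.pow_left n
  simp only [closure_inv_mul_apply_eq_range_commutatorHom] at hc₁ hc₂ ⊢
  exact sup_le (range_commutatorHom_le_mul_right a₂ (hcop a₁ h₁) hc₂)
    (range_commutatorHom_le_mul_left a₁ (hcop a₂ h₂) hc₁)

theorem stmt_9 (p : ℕ) [Fact p.Prime] (G : Type*) [CommGroup G] [Finite G]
    (hG : IsPGroup p G) (a₁ a₂ : MulAut G)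
    (h₁ : (orderOf a₁).Coprime p) (h₂ : (orderOf a₂).Coprime p)
    (hcomm : a₁ * a₂ = a₂ * a₁)
    (hc₂ : ∀ x ∈ Subgroup.closure {x : G | ∃ g : G, x = g⁻¹ * a₁ g}, a₂ x = x)
    (hc₁ : ∀ x ∈ Subgroup.closure {x : G | ∃ g : G, x = g⁻¹ * a₂ g}, a₁ x = x) :
    Subgroup.closure {x : G | ∃ g : G, x = g⁻¹ * a₁ g} ⊔
      Subgroup.closure {x : G | ∃ g : G, x = g⁻¹ * a₂ g} ≤
      Subgroup.closure {x : G | ∃ g : G, x = g⁻¹ * (a₁ * a₂) g} :=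
  stmt_9_general p G hG a₁ a₂ h₁ h₂ hc₂ hc₁
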